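/- Let N ≥ 2 and suppose a unitary U on ℂ^N ⊗ ℂ^N satisfies U(|n⟩ ⊗ |φ⟩) = |ψ⟩ ⊗ |φ_n⟩ for all n, where {|n⟩} is an orthonormal basis of the first factor, |φ⟩ and |ψ⟩ are unit vectors, and {|φ_n⟩} is an orthonormal family in the second factor. Then min_n |(⟨ψ| ⊗ ⟨φ_n|) (|n⟩ ⊗ |φ⟩)| ≤ 1/N, so by the quantum speed limit such a U generated by a Hamiltonian of spectral spread 2μ requires time at least arccos(1/N)/μ. -/

import Mathlib

open Matrix

/-!
The overlap of `|n⟩ ⊗ |φ⟩` with `|ψ⟩ ⊗ |φ_n⟩` factors as `conj (ψ n) * ⟨φ_n|φ⟩`. Both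
`(‖ψ n‖)` and `(‖⟨φ_n|φ⟩‖)` are unit vectors of `ℝ^N` (the latter by Parseval for the orthonormal
basis `φ_n`), so by Cauchy–Schwarz their entrywise products sum to at most `1` and one of them is
at most `1/N`.

For the time bound, in an eigenbasis of `H` the overlap `⟨x| e^{-itH} |x⟩` is a convex combination
of the phases `e^{-itE_j}`. After removing the phase of the midpoint of the spectrum they all lie
within angle `tμ` of `1`, so the overlap has modulus at least `cos (min (tμ) π)`; comparing with
`1/N` gives `tμ ≥ arccos (1/N)`.
-/

namespace Real

lemma cos_min_pi_le_cos {θ s : ℝ} (h : |θ| ≤ s) : cos (min s π) ≤ cos θ := by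
  rw [← cos_abs θ]
  rcases le_total |θ| π with hθ | hθ
  · exact cos_le_cos_of_nonneg_of_le_pi (abs_nonneg θ) (min_le_right _ _) (le_min h hθ)
  · rw [min_eq_right (hθ.trans h)]
    exact cos_pi ▸ neg_one_le_cos |θ|

lemma arccos_le_of_cos_min_pi_le {x y : ℝ} (hx : 0 ≤ x) (h : cos (min x π) ≤ y) :
    arccos y ≤ x := by
  rcases le_total π x with hπ | hπ
  · exact (arccos_le_pi y).trans hπ
  · rw [min_eq_left hπ] at h
    calc arccos y ≤ arccos (cos x) := arccos_le_arccos h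
      _ = x := arccos_cos hx hπ

end Real

lemma Complex.cos_min_pi_le_norm_sum_mul_exp {ι : Type*} [Fintype ι] {w θ : ι → ℝ} {c s : ℝ}
    (hw0 : ∀ j, 0 ≤ w j) (hw1 : ∑ j, w j = 1) (hθ : ∀ j, |θ j - c| ≤ s) :
    Real.cos (min s Real.pi) ≤ ‖∑ j, (w j : ℂ) * Complex.exp (θ j * Complex.I)‖ := by
  have hrot : ∀ j, Complex.exp (-c * Complex.I) * ((w j : ℂ) * Complex.exp (θ j * Complex.I)) =
      (w j : ℂ) * Complex.exp ((θ j - c : ℝ) * Complex.I) := fun j => by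
    rw [mul_left_comm, ← Complex.exp_add]; push_cast; ring_nf
  calc Real.cos (min s Real.pi) = ∑ j, w j * Real.cos (min s Real.pi) := by
        rw [← Finset.sum_mul, hw1, one_mul]
    _ ≤ ∑ j, w j * Real.cos (θ j - c) :=
        Finset.sum_le_sum fun j _ =>
          mul_le_mul_of_nonneg_left (Real.cos_min_pi_le_cos (hθ j)) (hw0 j)
    _ = (Complex.exp (-c * Complex.I) * ∑ j, (w j : ℂ) * Complex.exp (θ j * Complex.I)).re := by
        simp only [Finset.mul_sum, hrot, Complex.re_sum, Complex.re_ofReal_mul,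
          Complex.exp_ofReal_mul_I_re]
    _ ≤ ‖Complex.exp (-c * Complex.I) * ∑ j, (w j : ℂ) * Complex.exp (θ j * Complex.I)‖ :=
        Complex.re_le_norm _
    _ = ‖∑ j, (w j : ℂ) * Complex.exp (θ j * Complex.I)‖ := by
        rw [norm_mul, ← Complex.ofReal_neg, Complex.norm_exp_ofReal_mul_I, one_mul]

namespace Matrix

lemma star_dotProduct_tensor {R m n : Type*} [Fintype m] [Fintype n] [CommSemiring R]
    [StarRing R] (u w : m → R) (v y : n → R) :
    star (fun p : m × n => u p.1 * v p.2) ⬝ᵥ (fun p : m × n => w p.1 * y p.2) =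
      (star u ⬝ᵥ w) * (star v ⬝ᵥ y) := by
  simp only [dotProduct, Pi.star_apply, star_mul', Fintype.sum_prod_type, Finset.sum_mul_sum]
  exact Finset.sum_congr rfl fun i _ => Finset.sum_congr rfl fun j _ => by ring

variable {𝕜 n : Type*} [RCLike 𝕜] [Fintype n]

lemma star_dotProduct_self_eq_sum_sq_norm (v : n → 𝕜) :
    star v ⬝ᵥ v = ((∑ i, ‖v i‖ ^ 2 : ℝ) : 𝕜) := by
  push_cast
  exact Finset.sum_congr rfl fun i _ => RCLike.conj_mul (v i)

variable [DecidableEq n]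

lemma star_dotProduct_mul_diagonal_mul_conjTranspose_mulVec (V : Matrix n n 𝕜) (d : n → 𝕜)
    (x : n → 𝕜) :
    star x ⬝ᵥ (V * diagonal d * Vᴴ) *ᵥ x = ∑ j, d j * (‖(Vᴴ *ᵥ x) j‖ : 𝕜) ^ 2 := by
  have hstar : star x ᵥ* V = star (Vᴴ *ᵥ x) := by
    rw [star_mulVec, conjTranspose_conjTranspose]
  rw [← mulVec_mulVec, ← mulVec_mulVec, dotProduct_mulVec, hstar]
  simp only [dotProduct, mulVec_diagonal, Pi.star_apply, RCLike.star_def]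
  exact Finset.sum_congr rfl fun j _ => by rw [← RCLike.conj_mul]; ring

lemma sum_sq_norm_conjTranspose_mulVec {V : Matrix n n 𝕜} (hV : V * Vᴴ = 1) (x : n → 𝕜) :
    ((∑ j, ‖(Vᴴ *ᵥ x) j‖ ^ 2 : ℝ) : 𝕜) = star x ⬝ᵥ x := by
  simpa [hV] using (star_dotProduct_mul_diagonal_mul_conjTranspose_mulVec V 1 x).symm

lemma sum_sq_norm_star_dotProduct_of_orthonormal {φ : n → n → 𝕜}
    (hφ : ∀ i j, star (φ i) ⬝ᵥ φ j = if i = j then 1 else 0) (x : n → 𝕜) :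
    ((∑ j, ‖star (φ j) ⬝ᵥ x‖ ^ 2 : ℝ) : 𝕜) = star x ⬝ᵥ x := by
  set V : Matrix n n 𝕜 := of fun i j => φ j i
  have hV : Vᴴ * V = 1 := by
    ext i j
    simpa [V, mul_apply, one_apply, dotProduct] using hφ i j
  convert sum_sq_norm_conjTranspose_mulVec (mul_eq_one_comm.mp hV) x using 5 with j
  simp [V, mulVec, dotProduct]

end Matrix

namespace Matrix.IsHermitian

variable {n : Type*} [Fintype n] [DecidableEq n] {H : Matrix n n ℂ}

lemma exp_smul_eq (hH : H.IsHermitian) (z : ℂ) :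
    NormedSpace.exp (z • H) = (hH.eigenvectorUnitary : Matrix n n ℂ) *
      diagonal (fun j => Complex.exp (z * hH.eigenvalues j)) *
      (hH.eigenvectorUnitary : Matrix n n ℂ)ᴴ := by
  let V := Unitary.toUnits hH.eigenvectorUnitary
  have hzH : z • H = V * diagonal (fun j => z * hH.eigenvalues j) * (V⁻¹ : (Matrix n n ℂ)ˣ) := by
    conv_lhs => rw [hH.spectral_theorem, Unitary.conjStarAlgAut_apply]
    rw [← smul_mul_assoc, ← mul_smul_comm, ← diagonal_smul]
    rfl
  rw [hzH, exp_units_conj, exp_diagonal, Pi.exp_def]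
  simp only [← Complex.exp_eq_exp_ℂ]
  rfl

lemma star_dotProduct_exp_smul_mulVec (hH : H.IsHermitian) (z : ℂ) (x : n → ℂ) :
    star x ⬝ᵥ NormedSpace.exp (z • H) *ᵥ x =
      ∑ j, (‖((hH.eigenvectorUnitary : Matrix n n ℂ)ᴴ *ᵥ x) j‖ ^ 2 : ℝ) *
        Complex.exp (z * hH.eigenvalues j) := by
  rw [hH.exp_smul_eq, star_dotProduct_mul_diagonal_mul_conjTranspose_mulVec]
  push_cast
  exact Finset.sum_congr rfl fun j _ => mul_comm _ _

lemma cos_min_pi_le_norm_star_dotProduct_exp_mulVec (hH : H.IsHermitian) {μ t : ℝ} (ht : 0 ≤ t)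
    (hspread : (⨆ i, hH.eigenvalues i) - (⨅ i, hH.eigenvalues i) ≤ 2 * μ)
    {x : n → ℂ} (hx : star x ⬝ᵥ x = 1) :
    Real.cos (min (t * μ) Real.pi) ≤
      ‖star x ⬝ᵥ NormedSpace.exp ((-Complex.I * t) • H) *ᵥ x‖ := by
  have hE : ∀ j, |-t * hH.eigenvalues j - -t * ((⨆ i, hH.eigenvalues i) +
      (⨅ i, hH.eigenvalues i)) / 2| ≤ t * μ := fun j => by
    have hsup := le_ciSup (Set.finite_range hH.eigenvalues).bddAbove j
    have hinf := ciInf_le (Set.finite_range hH.eigenvalues).bddBelow j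
    rw [mul_div_assoc, ← mul_sub, abs_mul, abs_neg, abs_of_nonneg ht]
    exact mul_le_mul_of_nonneg_left (abs_le.mpr ⟨by linarith, by linarith⟩) ht
  have hw1 : ∑ j, ‖((hH.eigenvectorUnitary : Matrix n n ℂ)ᴴ *ᵥ x) j‖ ^ 2 = 1 :=
    Complex.ofReal_eq_one.mp ((sum_sq_norm_conjTranspose_mulVec
      (Unitary.mul_star_self_of_mem hH.eigenvectorUnitary.2) x).trans hx)
  convert Complex.cos_min_pi_le_norm_sum_mul_exp (fun _ => by positivity) hw1 hE using 2
  rw [hH.star_dotProduct_exp_smul_mulVec]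
  push_cast
  ring_nf

end Matrix.IsHermitian

lemma exists_mul_le_inv_card {ι : Type*} [Fintype ι] [Nonempty ι] {a b : ι → ℝ}
    (ha : ∑ i, a i ^ 2 = 1) (hb : ∑ i, b i ^ 2 = 1) :
    ∃ i, a i * b i ≤ 1 / Fintype.card ι := by
  have hsum : ∑ i, a i * b i ≤ ∑ _i : ι, 1 / (Fintype.card ι : ℝ) := by
    calc ∑ i, a i * b i ≤ √(∑ i, a i ^ 2) * √(∑ i, b i ^ 2) :=
          Real.sum_mul_le_sqrt_mul_sqrt _ a b
      _ = ∑ _i : ι, 1 / (Fintype.card ι : ℝ) := by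
          simp [ha, hb, Finset.card_univ]
  obtain ⟨i, -, hi⟩ := Finset.exists_le_of_sum_le Finset.univ_nonempty hsum
  exact ⟨i, hi⟩

theorem stmt17_general (N : ℕ) (hN : 2 ≤ N) (μ : ℝ) (hμ : 0 < μ)
    (ψ φ : Fin N → ℂ) (hψ : star ψ ⬝ᵥ ψ = 1) (hφ : star φ ⬝ᵥ φ = 1)
    (φn : Fin N → (Fin N → ℂ))
    (hφn : ∀ m n : Fin N, star (φn m) ⬝ᵥ φn n = if m = n then 1 else 0) :
    (∃ n : Fin N,
      ‖(star (fun p : Fin N × Fin N => ψ p.1 * φn n p.2) ⬝ᵥ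
          (fun p : Fin N × Fin N => (Pi.single n (1 : ℂ) : Fin N → ℂ) p.1 * φ p.2))‖ ≤
        1 / N) ∧
    ∀ (H : Matrix (Fin N × Fin N) (Fin N × Fin N) ℂ) (hH : H.IsHermitian),
      (⨆ i, hH.eigenvalues i) - (⨅ i, hH.eigenvalues i) ≤ 2 * μ →
      ∀ t : ℝ, 0 ≤ t →
        (∀ n : Fin N,
          (NormedSpace.exp ((-Complex.I * (t : ℂ)) • H)).mulVec
              (fun p => (Pi.single n (1 : ℂ) : Fin N → ℂ) p.1 * φ p.2) =
            fun p => ψ p.1 * φn n p.2) →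
        Real.arccos (1 / N) / μ ≤ t := by
  have : Nonempty (Fin N) := ⟨⟨0, by omega⟩⟩
  have hψ' : ∑ i, ‖ψ i‖ ^ 2 = 1 :=
    Complex.ofReal_eq_one.mp ((star_dotProduct_self_eq_sum_sq_norm ψ).symm.trans hψ)
  have hb : ∑ i, ‖star (φn i) ⬝ᵥ φ‖ ^ 2 = 1 :=
    Complex.ofReal_eq_one.mp ((sum_sq_norm_star_dotProduct_of_orthonormal hφn φ).trans hφ)
  obtain ⟨n, hn⟩ := exists_mul_le_inv_card hψ' hb
  rw [Fintype.card_fin] at hn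
  set e : Fin N × Fin N → ℂ := fun p => (Pi.single n (1 : ℂ) : Fin N → ℂ) p.1 * φ p.2
  have hoverlap : ‖star (fun p : Fin N × Fin N => ψ p.1 * φn n p.2) ⬝ᵥ e‖ ≤ 1 / N := by
    rwa [star_dotProduct_tensor, dotProduct_single_one, norm_mul, Pi.star_apply, norm_star]
  refine ⟨⟨n, hoverlap⟩, fun H hH hspread t ht hevol => ?_⟩
  have he : star e ⬝ᵥ e = 1 := by
    rw [star_dotProduct_tensor, hφ, ← Pi.single_star, star_one, single_one_dotProduct,
      Pi.single_eq_same, one_mul]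
  have hcos := hH.cos_min_pi_le_norm_star_dotProduct_exp_mulVec ht hspread he
  rw [hevol n, star_dotProduct, norm_star] at hcos
  rw [div_le_iff₀ hμ]
  exact Real.arccos_le_of_cos_min_pi_le (by positivity) (hcos.trans hoverlap)

theorem stmt17 (N : ℕ) (hN : 2 ≤ N) (μ : ℝ) (hμ : 0 < μ)
    (ψ φ : Fin N → ℂ) (hψ : star ψ ⬝ᵥ ψ = 1) (hφ : star φ ⬝ᵥ φ = 1)
    (φn : Fin N → (Fin N → ℂ))
    (hφn : ∀ m n : Fin N, star (φn m) ⬝ᵥ φn n = if m = n then 1 else 0)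
    (U : (Fin N × Fin N → ℂ) ≃ₗ[ℂ] (Fin N × Fin N → ℂ))
    (hUiso : ∀ x y : Fin N × Fin N → ℂ, star (U x) ⬝ᵥ U y = star x ⬝ᵥ y)
    (hU : ∀ n : Fin N,
      U (fun p => (Pi.single n (1 : ℂ) : Fin N → ℂ) p.1 * φ p.2) =
        fun p => ψ p.1 * φn n p.2) :
    (∃ n : Fin N,
      ‖(star (fun p : Fin N × Fin N => ψ p.1 * φn n p.2) ⬝ᵥ
          (fun p : Fin N × Fin N => (Pi.single n (1 : ℂ) : Fin N → ℂ) p.1 * φ p.2))‖ ≤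
        1 / N) ∧
    ∀ (H : Matrix (Fin N × Fin N) (Fin N × Fin N) ℂ) (hH : H.IsHermitian),
      (⨆ i, hH.eigenvalues i) - (⨅ i, hH.eigenvalues i) ≤ 2 * μ →
      ∀ t : ℝ, 0 ≤ t →
        (∀ n : Fin N,
          (NormedSpace.exp ((-Complex.I * (t : ℂ)) • H)).mulVec
              (fun p => (Pi.single n (1 : ℂ) : Fin N → ℂ) p.1 * φ p.2) =
            fun p => ψ p.1 * φn n p.2) →
        Real.arccos (1 / N) / μ ≤ t :=
  stmt17_general N hN μ hμ ψ φ hψ hφ φn hφn
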